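/- arXiv:2403.19361 — 4 statements merged into one kernel-verified Lean document; each statement's English description precedes it below -/
import Mathlib

section
/- For all k, l, m ∈ {1,2,3}: Σ_k^(1)·Σ_l^(2)·Σ_m^(1) = δ_{kl}Σ_m^(1) − δ_{km}Σ_l^(1) + δ_{lm}Σ_k^(1) + i·ε_{klm}Σ₀^(1), and Σ_k^(2)·Σ_l^(1)·Σ_m^(2) = δ_{kl}Σ_m^(2) − δ_{km}Σ_l^(2) + δ_{lm}Σ_k^(2) + i·ε_{klm}Σ₀^(2), where δ is the Kronecker delta and ε the Levi-Civita symbol. -/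
open Matrix Complex

/-- The Pauli matrices σ₀, σ₁, σ₂, σ₃. -/
noncomputable def pauli : Fin 4 → Matrix (Fin 2) (Fin 2) ℂ
  | 0 => !![1, 0; 0, 1]
  | 1 => !![0, 1; 1, 0]
  | 2 => !![0, -I; I, 0]
  | 3 => !![1, 0; 0, -1]

/-- The ternary elementary Σ-matrix Σ_j^(1) = [[0, σ_j],[0,0]]. -/
noncomputable def Sig1 (j : Fin 4) : Matrix (Fin 2 ⊕ Fin 2) (Fin 2 ⊕ Fin 2) ℂ :=
  Matrix.fromBlocks 0 (pauli j) 0 0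

/-- The ternary elementary Σ-matrix Σ_j^(2) = [[0, 0],[σ_j,0]]. -/
noncomputable def Sig2 (j : Fin 4) : Matrix (Fin 2 ⊕ Fin 2) (Fin 2 ⊕ Fin 2) ℂ :=
  Matrix.fromBlocks 0 0 (pauli j) 0

/-- The Levi-Civita symbol on three indices. -/
def eps (k l m : Fin 3) : ℤ :=
  ((l : ℤ) - (k : ℤ)) * ((m : ℤ) - (l : ℤ)) * ((m : ℤ) - (k : ℤ)) / 2

/-- The Kronecker delta (with values in ℂ). -/
noncomputable def kron (k l : Fin 3) : ℂ := if k = l then 1 else 0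

lemma pauli_triple (k l m : Fin 3) :
    pauli k.succ * pauli l.succ * pauli m.succ =
      kron k l • pauli m.succ - kron k m • pauli l.succ + kron l m • pauli k.succ +
        (Complex.I * (eps k l m : ℂ)) • pauli 0 := by
  have hs : ∀ j : Fin 3, pauli j.succ = pauli j.succ := fun _ => rfl
  fin_cases k <;> fin_cases l <;> fin_cases m <;>
    norm_num [kron, eps, pauli, Fin.succ, Matrix.mul_fin_two, Matrix.smul_of,
      Matrix.of_add_of, Matrix.of_sub_of, smul_eq_mul, Fin.ext_iff]

theorem elementary_sigma_cayley (k l m : Fin 3) :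
    Sig1 k.succ * Sig2 l.succ * Sig1 m.succ =
      kron k l • Sig1 m.succ - kron k m • Sig1 l.succ + kron l m • Sig1 k.succ +
        (Complex.I * (eps k l m : ℂ)) • Sig1 0 ∧
    Sig2 k.succ * Sig1 l.succ * Sig2 m.succ =
      kron k l • Sig2 m.succ - kron k m • Sig2 l.succ + kron l m • Sig2 k.succ +
        (Complex.I * (eps k l m : ℂ)) • Sig2 0 := by
  have h := pauli_triple k l m
  constructor <;>
  · simp only [Sig1, Sig2, Matrix.fromBlocks_multiply, mul_zero, zero_mul, add_zero, zero_add,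
      Matrix.mul_zero, Matrix.zero_mul]
    rw [h]
    simp only [sub_eq_add_neg, Matrix.fromBlocks_neg, Matrix.fromBlocks_add,
      Matrix.fromBlocks_smul, smul_zero, neg_zero, add_zero, zero_add]
end

section
/- Every ternary elementary Σ-matrix is non-invertible: det Σ_j^(k) = 0 for all j ∈ {0,1,2,3} and k ∈ {1,2}. However, if the real parameters satisfy (x₀^(1))² + |x⃗^(1)|² = 1 and (x₀^(2))² + |x⃗^(2)|² = 1, then the sum 𝐌 = x₀^(1)Σ₀^(1) + i x⃗^(1)·Σ⃗^(1) + x₀^(2)Σ₀^(2) + i x⃗^(2)·Σ⃗^(2) is invertible, with det 𝐌 = 1. -/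
set_option maxHeartbeats 2000000


open Matrix Complex

lemma det_offdiag_blocks (A B : Matrix (Fin 2) (Fin 2) ℂ) :
    (Matrix.fromBlocks 0 A B 0).det = A.det * B.det := by
  have hmul : Matrix.fromBlocks (0 : Matrix (Fin 2) (Fin 2) ℂ) A B 0 =
      Matrix.fromBlocks A 0 0 B * Matrix.fromBlocks 0 1 1 0 := by
    rw [Matrix.fromBlocks_multiply]; simp
  have hswap : (Matrix.fromBlocks (0 : Matrix (Fin 2) (Fin 2) ℂ) 1 1 0) =
      (1 : Matrix (Fin 2 ⊕ Fin 2) (Fin 2 ⊕ Fin 2) ℂ).submatrix (Equiv.sumComm (Fin 2) (Fin 2)) id := by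
    ext (i|i) (j|j) <;> simp [Matrix.one_apply, Sum.inl.injEq, eq_comm]
  have hsign : Equiv.Perm.sign ((Equiv.sumComm (Fin 2) (Fin 2)) : Equiv.Perm (Fin 2 ⊕ Fin 2)) = 1 := by
    decide
  rw [hmul, Matrix.det_mul, Matrix.det_fromBlocks_zero₂₁, hswap,
    Matrix.det_permute, hsign, Matrix.det_one]
  simp

theorem elementary_sigma_noninvertible_but_sum_invertible
    (x01 x02 : ℝ) (x1 x2 : Fin 3 → ℝ)
    (h1 : x01 ^ 2 + x1 ⬝ᵥ x1 = 1) (h2 : x02 ^ 2 + x2 ⬝ᵥ x2 = 1) :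
    (∀ j : Fin 4, (Sig1 j).det = 0 ∧ (Sig2 j).det = 0) ∧
    ((x01 : ℂ) • Sig1 0 +
        Complex.I • ((x1 0 : ℂ) • Sig1 1 + (x1 1 : ℂ) • Sig1 2 + (x1 2 : ℂ) • Sig1 3) +
      (x02 : ℂ) • Sig2 0 +
        Complex.I • ((x2 0 : ℂ) • Sig2 1 + (x2 1 : ℂ) • Sig2 2 + (x2 2 : ℂ) • Sig2 3)).det
      = 1 ∧
    IsUnit ((x01 : ℂ) • Sig1 0 +
        Complex.I • ((x1 0 : ℂ) • Sig1 1 + (x1 1 : ℂ) • Sig1 2 + (x1 2 : ℂ) • Sig1 3) +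
      (x02 : ℂ) • Sig2 0 +
        Complex.I • ((x2 0 : ℂ) • Sig2 1 + (x2 1 : ℂ) • Sig2 2 + (x2 2 : ℂ) • Sig2 3)) := by
  set M := (x01 : ℂ) • Sig1 0 +
        Complex.I • ((x1 0 : ℂ) • Sig1 1 + (x1 1 : ℂ) • Sig1 2 + (x1 2 : ℂ) • Sig1 3) +
      (x02 : ℂ) • Sig2 0 +
        Complex.I • ((x2 0 : ℂ) • Sig2 1 + (x2 1 : ℂ) • Sig2 2 + (x2 2 : ℂ) • Sig2 3) with hM
  have hdet : M.det = 1 := by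
    have h1' : (x01 : ℂ) ^ 2 + ((x1 0 : ℂ) ^ 2 + (x1 1 : ℂ) ^ 2 + (x1 2 : ℂ) ^ 2) = 1 := by
      simp [dotProduct, Fin.sum_univ_three] at h1
      exact_mod_cast by push_cast; nlinarith [h1]
    have h2' : (x02 : ℂ) ^ 2 + ((x2 0 : ℂ) ^ 2 + (x2 1 : ℂ) ^ 2 + (x2 2 : ℂ) ^ 2) = 1 := by
      simp [dotProduct, Fin.sum_univ_three] at h2
      exact_mod_cast by push_cast; nlinarith [h2]
    have hblk : M = Matrix.fromBlocks 0
        !![(x01:ℂ) + I * (x1 2), I * (x1 0) + (x1 1); I * (x1 0) - (x1 1), (x01:ℂ) - I * (x1 2)]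
        !![(x02:ℂ) + I * (x2 2), I * (x2 0) + (x2 1); I * (x2 0) - (x2 1), (x02:ℂ) - I * (x2 2)]
        0 := by
      rw [hM]
      ext (i|i) (j|j) <;> fin_cases i <;> fin_cases j <;>
        simp [Sig1, Sig2, pauli] <;> ring_nf <;> simp [Complex.I_sq] <;> ring
    rw [hblk, det_offdiag_blocks, Matrix.det_fin_two_of, Matrix.det_fin_two_of]
    have dA : ((x01:ℂ) + I * (x1 2)) * ((x01:ℂ) - I * (x1 2)) -
        (I * (x1 0) + (x1 1)) * (I * (x1 0) - (x1 1)) = 1 := by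
      linear_combination h1' - ((x1 0 : ℂ)^2 + (x1 2 : ℂ)^2) * Complex.I_sq
    have dB : ((x02:ℂ) + I * (x2 2)) * ((x02:ℂ) - I * (x2 2)) -
        (I * (x2 0) + (x2 1)) * (I * (x2 0) - (x2 1)) = 1 := by
      linear_combination h2' - ((x2 0 : ℂ)^2 + (x2 2 : ℂ)^2) * Complex.I_sq
    rw [dA, dB, one_mul]
  refine ⟨fun j => ⟨?_, ?_⟩, hdet, ?_⟩
  · simp [Sig1, Matrix.det_fromBlocks_zero₂₁]
  · simp [Sig2, Matrix.det_fromBlocks_zero₁₂]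
  · exact (Matrix.isUnit_iff_isUnit_det M).mpr (by simp [hdet])
end

section
/- For all k, l, m ∈ {1,2,3}, the ternary commutator of full ternary Σ-matrices satisfies [Σ_k, Σ_l, Σ_m]^[3] = 6i·ε_{klm}·Σ₀. -/
open Matrix Complex

/-- The full ternary Σ-matrix Σ_j = [[0, σ_j],[σ_j, 0]]. -/
noncomputable def Sig (j : Fin 4) : Matrix (Fin 2 ⊕ Fin 2) (Fin 2 ⊕ Fin 2) ℂ :=
  Matrix.fromBlocks 0 (pauli j) (pauli j) 0

/-- The ternary commutator [a,b,c]^[3]. -/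
noncomputable def tcomm {n : Type*} [Fintype n] (a b c : Matrix n n ℂ) : Matrix n n ℂ :=
  a * b * c + b * c * a + c * a * b - a * c * b - b * a * c - c * b * a

lemma sig_mul3 (a b c : Fin 4) :
    Sig a * Sig b * Sig c =
      Matrix.fromBlocks 0 (pauli a * pauli b * pauli c) (pauli a * pauli b * pauli c) 0 := by
  simp [Sig, Matrix.fromBlocks_multiply, Matrix.mul_assoc]

lemma tcomm_sig (a b c : Fin 4) :
    tcomm (Sig a) (Sig b) (Sig c) =
      Matrix.fromBlocks 0 (tcomm (pauli a) (pauli b) (pauli c))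
        (tcomm (pauli a) (pauli b) (pauli c)) 0 := by
  ext i j
  cases i <;> cases j <;> simp [tcomm, sig_mul3]

noncomputable def P : Fin 3 → Matrix (Fin 2) (Fin 2) ℂ :=
  ![!![0, 1; 1, 0], !![0, -I; I, 0], !![1, 0; 0, -1]]

lemma pauli_succ (k : Fin 3) : pauli k.succ = P k := by
  fin_cases k <;> rfl

set_option maxHeartbeats 4000000 in
lemma tcomm_pauli (k l m : Fin 3) :
    tcomm (pauli k.succ) (pauli l.succ) (pauli m.succ) =
      ((6 : ℂ) * Complex.I * (eps k l m : ℂ)) • pauli 0 := by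
  rw [pauli_succ, pauli_succ, pauli_succ, show pauli 0 = (1 : Matrix (Fin 2) (Fin 2) ℂ) by
    ext i j; fin_cases i <;> fin_cases j <;> simp [pauli, Matrix.one_apply]]
  fin_cases k <;> fin_cases l <;> fin_cases m <;>
    · ext i j
      fin_cases i <;> fin_cases j <;>
        simp [tcomm, P, eps, Matrix.mul_apply, Fin.sum_univ_two, Matrix.one_apply] <;>
        ring_nf

theorem full_sigma_ternary_commutator (k l m : Fin 3) :
    tcomm (Sig k.succ) (Sig l.succ) (Sig m.succ) =
      ((6 : ℂ) * Complex.I * (eps k l m : ℂ)) • Sig 0 := by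
  rw [tcomm_sig, tcomm_pauli, Sig]
  simp [Matrix.fromBlocks_smul]
end

section
/- For all k, l, m ∈ {1,2,3}, the ternary anti-commutator of full ternary Σ-matrices satisfies {Σ_k, Σ_l, Σ_m}^[3] = 2δ_{kl}Σ_m + 2δ_{km}Σ_l + 2δ_{lm}Σ_k. -/
open Matrix Complex

/-- The ternary anti-commutator {a,b,c}^[3]. -/
noncomputable def tacomm {n : Type*} [Fintype n] (a b c : Matrix n n ℂ) : Matrix n n ℂ :=
  a * b * c + b * c * a + c * a * b + a * c * b + b * a * c + c * b * a


/-!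
The Σ-matrices obey the Clifford relations `Σ_k Σ_l + Σ_l Σ_k = 2 δ_{kl}`, inherited from the Pauli
matrices because a product of two block off-diagonal matrices is block diagonal. Grouping the six
terms of the ternary anti-commutator as `a {b, c} + b {c, a} + c {a, b}` then gives the formula.
-/

lemma tacomm_eq_mul_anticomm {n : Type*} [Fintype n] (a b c : Matrix n n ℂ) :
    tacomm a b c = a * (b * c + c * b) + b * (c * a + a * c) + c * (a * b + b * a) := by
  simp only [tacomm]
  noncomm_ring

lemma kron_comm (k l : Fin 3) : kron k l = kron l k := by
  simp only [kron, eq_comm]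

lemma tacomm_of_anticomm {n : Type*} [Fintype n] [DecidableEq n] (e : Fin 3 → Matrix n n ℂ)
    (he : ∀ k l, e k * e l + e l * e k = (2 * kron k l) • 1) (k l m : Fin 3) :
    tacomm (e k) (e l) (e m) =
      (2 * kron k l) • e m + (2 * kron k m) • e l + (2 * kron l m) • e k := by
  rw [tacomm_eq_mul_anticomm, he, he, he, kron_comm m k]
  simp only [Matrix.mul_smul, mul_one]
  abel

lemma pauli_anticomm (k l : Fin 3) :
    pauli k.succ * pauli l.succ + pauli l.succ * pauli k.succ = (2 * kron k l) • 1 := by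
  fin_cases k <;> fin_cases l <;>
    ext i j <;> fin_cases i <;> fin_cases j <;>
    norm_num [pauli, kron]

lemma Sig_mul (i j : Fin 4) :
    Sig i * Sig j = fromBlocks (pauli i * pauli j) 0 0 (pauli i * pauli j) := by
  simp [Sig, fromBlocks_multiply]

lemma Sig_anticomm (k l : Fin 3) :
    Sig k.succ * Sig l.succ + Sig l.succ * Sig k.succ = (2 * kron k l) • 1 := by
  rw [Sig_mul, Sig_mul, fromBlocks_add, pauli_anticomm, ← fromBlocks_one, fromBlocks_smul]
  simp

theorem full_sigma_ternary_anticommutator (k l m : Fin 3) :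
    tacomm (Sig k.succ) (Sig l.succ) (Sig m.succ) =
      (2 * kron k l) • Sig m.succ + (2 * kron k m) • Sig l.succ +
        (2 * kron l m) • Sig k.succ :=
  tacomm_of_anticomm (fun j => Sig j.succ) Sig_anticomm k l m
end
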